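/- For each irrational real number α, let B_α = {m + nα : m, n ∈ ℤ} ⊆ ℝ be the meet-semilattice under min, with ℤ² acting by (i,j)(m + nα) = (m+i) + (n+j)α. Then B_α is a ℤ²-semilattice generated by each of its elements, hence generates a minimal quasivariety; moreover, for distinct irrationals α < β, choosing integers p, q with α < p/q < β, the identity ((p,0)(x)) ∧ ((0,q)(x)) = (0,q)(x) holds in B_α but fails in B_β, so Q(B_α) ≠ Q(B_β). Consequently there are continuum many minimal quasivarieties of ℤ²-semilattices. -/

import Mathlib

inductive SLTerm (F : Type) : Type where
  | var : SLTerm F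
  | meet : SLTerm F → SLTerm F → SLTerm F
  | act : F → SLTerm F → SLTerm F

/-- Evaluation of a unary term at an element of an `F`-semilattice. -/
def SLTerm.eval {F A : Type} [SemilatticeInf A] [SMul F A] : SLTerm F → A → A
  | .var, a => a
  | .meet s t, a => s.eval a ⊓ t.eval a
  | .act g t, a => g • t.eval a

inductive SLTermN (F : Type) : Type where
  | var : ℕ → SLTermN F
  | meet : SLTermN F → SLTermN F → SLTermN F
  | act : F → SLTermN F → SLTermN F

def SLTermN.eval {F A : Type} [SemilatticeInf A] [SMul F A] : SLTermN F → (ℕ → A) → A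
  | .var n, v => v n
  | .meet s t, v => s.eval v ⊓ t.eval v
  | .act g t, v => g • t.eval v

def SatQI (F : Type) (A : Type) [SemilatticeInf A] [SMul F A]
    (prem : List (SLTermN F × SLTermN F)) (c : SLTermN F × SLTermN F) : Prop :=
  ∀ v : ℕ → A, (∀ p ∈ prem, p.1.eval v = p.2.eval v) → c.1.eval v = c.2.eval v

/-- `B` belongs to the quasivariety generated by `A`. -/
def InQ (F : Type) (A B : Type) [SemilatticeInf A] [SMul F A]
    [SemilatticeInf B] [SMul F B] : Prop :=
  ∀ prem c, SatQI F A prem c → SatQI F B prem c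

/-- `B` belongs to the variety generated by `A`. -/
def InV (F : Type) (A B : Type) [SemilatticeInf A] [SMul F A]
    [SemilatticeInf B] [SMul F B] : Prop :=
  ∀ s t : SLTermN F, (∀ v : ℕ → A, s.eval v = t.eval v) → ∀ v : ℕ → B, s.eval v = t.eval v

def IsHom (F : Type) {A B : Type} [SemilatticeInf A] [SMul F A] [SemilatticeInf B] [SMul F B]
    (φ : A → B) : Prop :=
  (∀ x y : A, φ (x ⊓ y) = φ x ⊓ φ y) ∧ ∀ (g : F) (x : A), φ (g • x) = g • φ x

/-- The subuniverse of `A` generated by `a`. -/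
def genSet (F : Type) {A : Type} [SemilatticeInf A] [SMul F A] (a : A) : Set A :=
  Set.range fun t : SLTerm F => t.eval a

/-- The quasivariety generated by `A` is a minimal quasivariety of `F`-semilattices. -/
def MinGen (F : Type) [CommGroup F] (A : Type) [SemilatticeInf A] [MulAction F A] : Prop :=
  Nontrivial A ∧
    ∀ (B : Type) [SemilatticeInf B] [MulAction F B],
      (∀ (g : F) (x y : B), g • (x ⊓ y) = g • x ⊓ g • y) →
      InQ F A B → Nontrivial B → InQ F B A

/-- The free abelian group `ℤ²`, written multiplicatively. -/
abbrev Zsq : Type := Multiplicative ℤ × Multiplicative ℤ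

/-- The carrier `B_α = {m + nα : m, n ∈ ℤ} ⊆ ℝ`. -/
def Bcar (α : ℝ) : Type := {x : ℝ // ∃ m n : ℤ, x = m + n * α}

noncomputable instance (α : ℝ) : SemilatticeInf (Bcar α) :=
  inferInstanceAs (SemilatticeInf {x : ℝ // ∃ m n : ℤ, x = m + n * α})

noncomputable instance (α : ℝ) : SMul Zsq (Bcar α) :=
  ⟨fun g x => ⟨x.1 + (Multiplicative.toAdd g.1 : ℤ) + (Multiplicative.toAdd g.2 : ℤ) * α, by
    obtain ⟨m, n, h⟩ := x.2
    exact ⟨m + Multiplicative.toAdd g.1, n + Multiplicative.toAdd g.2, by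
      rw [h]; push_cast; ring⟩⟩⟩

theorem Bcar.smul_val (α : ℝ) (g : Zsq) (x : Bcar α) :
    (g • x).1 = x.1 + (Multiplicative.toAdd g.1 : ℤ) + (Multiplicative.toAdd g.2 : ℤ) * α :=
  rfl

noncomputable instance (α : ℝ) : MulAction Zsq (Bcar α) where
  one_smul x := by
    apply Subtype.ext
    rw [Bcar.smul_val]
    simp
  mul_smul g h x := by
    apply Subtype.ext
    rw [Bcar.smul_val, Bcar.smul_val, Bcar.smul_val]
    simp only [Prod.fst_mul, Prod.snd_mul, toAdd_mul]
    push_cast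
    ring


/-!
`ℤ²` acts freely and transitively on `B_α` by automorphisms. For such a regular action of a
commutative group, an identity `g x ∧ h x = k x` that holds at one point holds everywhere, so it
is an identity of `B_α`. If `B ∈ Q(B_α)` is nontrivial, these identities and the quasi-identities
`g x = x → y = z` (`g ≠ 1`) pass to `B`, and then for any `b ∈ B` the orbit map `g • a ↦ g • b`
embeds `B_α` into `B`; hence `Q(B) = Q(B_α)`. The identity `(p,0) x ∧ (0,q) x = (0,q) x` says
`q α ≤ p`, so a rational number between `α` and `β` separates `Q(B_α)` from `Q(B_β)`.
-/

open MulAction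

section Quasivariety

variable {F A B : Type} [SemilatticeInf A] [SMul F A] [SemilatticeInf B] [SMul F B]

lemma SLTermN.eval_comp_of_isHom {φ : A → B} (hφ : IsHom F φ) (t : SLTermN F) (v : ℕ → A) :
    t.eval (φ ∘ v) = φ (t.eval v) := by
  induction t with
  | var n => rfl
  | meet s t hs ht => simp only [SLTermN.eval, hs, ht, hφ.1]
  | act g t ht => simp only [SLTermN.eval, ht, hφ.2]

lemma InQ.of_isHom_of_injective {φ : A → B} (hφ : IsHom F φ) (hinj : Function.Injective φ) :
    InQ F B A := by
  intro prem c hsat v hv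
  apply hinj
  rw [← SLTermN.eval_comp_of_isHom hφ, ← SLTermN.eval_comp_of_isHom hφ]
  exact hsat _ fun p hp => by
    rw [SLTermN.eval_comp_of_isHom hφ, SLTermN.eval_comp_of_isHom hφ, hv p hp]

lemma InQ.inV (h : InQ F A B) : InV F A B :=
  fun s t hst v => h [] (s, t) (fun w _ => hst w) v nofun

lemma InV.smul_inf_smul_eq (h : InV F A B) {g₁ g₂ g₃ : F}
    (hA : ∀ x : A, g₁ • x ⊓ g₂ • x = g₃ • x) (y : B) : g₁ • y ⊓ g₂ • y = g₃ • y :=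
  h (.meet (.act g₁ (.var 0)) (.act g₂ (.var 0))) (.act g₃ (.var 0)) (fun v => hA (v 0))
    fun _ => y

lemma InQ.smul_ne_self [Nontrivial B] (h : InQ F A B) {g : F} (hA : ∀ x : A, g • x ≠ x)
    (y : B) : g • y ≠ y := by
  intro hy
  obtain ⟨b₁, b₂, hb⟩ := exists_pair_ne B
  refine hb (h [(.act g (.var 0), .var 0)] (.var 1, .var 2) ?_
    (fun n => if n = 0 then y else if n = 1 then b₁ else b₂) ?_)
  · intro v hv
    exact absurd (hv _ List.mem_cons_self) (hA (v 0))
  · simpa [SLTermN.eval] using hy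

end Quasivariety

section RegularAction

variable {F A : Type} [CommGroup F] [SemilatticeInf A] [MulAction F A] [IsPretransitive F A]

lemma smul_inf_smul_eq_of_eq_at (hinf : ∀ (g : F) (x y : A), g • (x ⊓ y) = g • x ⊓ g • y)
    {g₁ g₂ g₃ : F} {a : A} (ha : g₁ • a ⊓ g₂ • a = g₃ • a) (x : A) :
    g₁ • x ⊓ g₂ • x = g₃ • x := by
  obtain ⟨c, rfl⟩ := exists_smul_eq F a x
  simp only [smul_comm _ c, ← hinf, ha]

variable (hinf : ∀ (g : F) (x y : A), g • (x ⊓ y) = g • x ⊓ g • y)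
  (hfree : ∀ (g : F) (x : A), g • x = x → g = 1)
include hinf hfree

lemma InQ.of_free_of_isPretransitive [Nonempty A] {B : Type} [SemilatticeInf B] [MulAction F B]
    [Nontrivial B] (hQ : InQ F A B) : InQ F B A := by
  obtain ⟨a⟩ := ‹Nonempty A›
  obtain ⟨b⟩ := ‹Nontrivial B›.to_nonempty
  have hfreeB (g : F) (y : B) (hy : g • y = y) : g = 1 := by
    by_contra hg
    exact hQ.smul_ne_self (fun x hx => hg (hfree g x hx)) y hy
  choose coord hcoord using exists_smul_eq F a
  have coord_smul (g : F) : coord (g • a) = g := by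
    have := hfree (g⁻¹ * coord (g • a)) a (by rw [mul_smul, hcoord, inv_smul_smul])
    rwa [inv_mul_eq_one, eq_comm] at this
  let φ : A → B := fun x => coord x • b
  have φ_smul (g : F) : φ (g • a) = g • b := by simp only [φ, coord_smul]
  refine InQ.of_isHom_of_injective (φ := φ) ⟨fun x y => ?_, fun g x => ?_⟩ fun x y hxy => ?_
  · rw [← hcoord x, ← hcoord y, ← hcoord (coord x • a ⊓ coord y • a), φ_smul, φ_smul, φ_smul]
    exact (hQ.inV.smul_inf_smul_eq (smul_inf_smul_eq_of_eq_at hinf (hcoord _).symm) b).symm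
  · rw [← hcoord x, smul_smul, φ_smul, φ_smul, mul_smul]
  · have := hfreeB _ b (by rw [mul_smul, show coord x • b = coord y • b from hxy, inv_smul_smul])
    rw [← hcoord x, ← hcoord y, inv_mul_eq_one.1 this]

lemma minGen_of_free_of_isPretransitive [Nontrivial A] : MinGen F A :=
  ⟨‹_›, fun _ _ _ _ hQ _ => InQ.of_free_of_isPretransitive hinf hfree hQ⟩

end RegularAction

namespace Bcar

variable {α : ℝ}

def shift (α : ℝ) (g : Zsq) : ℝ :=
  (Multiplicative.toAdd g.1 : ℤ) + (Multiplicative.toAdd g.2 : ℤ) * α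

lemma val_smul (g : Zsq) (x : Bcar α) : (g • x).1 = x.1 + shift α g := by
  rw [smul_val, shift, add_assoc]

lemma val_inf (x y : Bcar α) : (x ⊓ y).1 = min x.1 y.1 := rfl

lemma smul_inf (g : Zsq) (x y : Bcar α) : g • (x ⊓ y) = g • x ⊓ g • y :=
  Subtype.ext <| by simp only [val_smul, val_inf, min_add_add_right]

instance : Nontrivial (Bcar α) :=
  ⟨⟨⟨0, 0, 0, by simp⟩, ⟨1, 1, 0, by simp⟩, fun h => zero_ne_one (congrArg Subtype.val h)⟩⟩

instance : IsPretransitive Zsq (Bcar α) where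
  exists_smul_eq := by
    intro x y
    obtain ⟨m, n, hx⟩ := x.2
    obtain ⟨m', n', hy⟩ := y.2
    refine ⟨(Multiplicative.ofAdd (m' - m), Multiplicative.ofAdd (n' - n)), Subtype.ext ?_⟩
    rw [val_smul, hx, hy]
    simp only [shift, toAdd_ofAdd]
    push_cast
    ring

lemma eq_one_of_smul_eq (hα : Irrational α) (g : Zsq) (x : Bcar α) (h : g • x = x) : g = 1 := by
  have hshift : shift α g = 0 := by
    simpa only [val_smul, add_eq_left] using congrArg Subtype.val h
  obtain ⟨m, n⟩ := g
  have hn : Multiplicative.toAdd n = 0 := by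
    by_contra hn
    exact (hα.intCast_mul hn).intCast_add (Multiplicative.toAdd m) |>.ne_zero hshift
  simp only [shift, hn, Int.cast_zero, zero_mul, add_zero, Int.cast_eq_zero] at hshift
  exact Prod.ext hshift hn

lemma smul_inf_smul_eq_right_iff (g h : Zsq) :
    (∀ x : Bcar α, g • x ⊓ h • x = h • x) ↔ shift α h ≤ shift α g := by
  constructor
  · intro hall
    have := congrArg Subtype.val (hall (Classical.arbitrary _))
    rw [val_inf, val_smul, val_smul, min_eq_right_iff] at this
    linarith
  · intro hle x
    refine Subtype.ext ?_
    rw [val_inf, val_smul, val_smul]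
    exact min_eq_right (by linarith)

lemma ofAdd_smul_inf_ofAdd_smul_eq_iff (p q : ℤ) :
    (∀ x : Bcar α, ((Multiplicative.ofAdd p, 1) : Zsq) • x ⊓ ((1, Multiplicative.ofAdd q) : Zsq) • x
      = ((1, Multiplicative.ofAdd q) : Zsq) • x) ↔ q * α ≤ p := by
  rw [smul_inf_smul_eq_right_iff]
  simp [shift]

lemma not_inQ_of_lt {β : ℝ} (hαβ : α < β) : ¬ InQ Zsq (Bcar α) (Bcar β) := by
  intro hQ
  obtain ⟨r, hαr, hrβ⟩ := exists_rat_btwn hαβ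
  have hden : (0 : ℝ) < r.den := by positivity
  rw [Rat.cast_def, lt_div_iff₀ hden] at hαr
  rw [Rat.cast_def, div_lt_iff₀ hden] at hrβ
  have hβ := hQ.inV.smul_inf_smul_eq <|
    (ofAdd_smul_inf_ofAdd_smul_eq_iff r.num r.den).2 (by push_cast; linarith)
  rw [ofAdd_smul_inf_ofAdd_smul_eq_iff] at hβ
  push_cast at hβ
  linarith

end Bcar

/-- Each `B_α` (α irrational) is a `ℤ²`-semilattice generated by each of its elements,
hence generates a minimal quasivariety; for irrationals `α < β` and integers `p, q` with
`0 < q` and `α < p/q < β`, the identity `(p,0)(x) ⊓ (0,q)(x) = (0,q)(x)` holds in `B_α`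
but fails in `B_β`; consequently distinct irrationals give distinct minimal
quasivarieties, so there are continuum many minimal quasivarieties of `ℤ²`-semilattices. -/
theorem stmt_19 :
    (∀ α : ℝ, Irrational α →
      (∀ (g : Zsq) (x y : Bcar α), g • (x ⊓ y) = g • x ⊓ g • y) ∧
      (∀ x y : Bcar α, ∃ t : SLTerm Zsq, t.eval x = y) ∧
      MinGen Zsq (Bcar α)) ∧
    (∀ α β : ℝ, Irrational α → Irrational β → α < β →
      ∀ p q : ℤ, 0 < q → α < (p : ℝ) / (q : ℝ) → (p : ℝ) / (q : ℝ) < β →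
        (∀ x : Bcar α,
          (((Multiplicative.ofAdd p, (1 : Multiplicative ℤ)) : Zsq) • x) ⊓
              ((((1 : Multiplicative ℤ), Multiplicative.ofAdd q) : Zsq) • x) =
            (((1 : Multiplicative ℤ), Multiplicative.ofAdd q) : Zsq) • x) ∧
        ¬ (∀ x : Bcar β,
          (((Multiplicative.ofAdd p, (1 : Multiplicative ℤ)) : Zsq) • x) ⊓
              ((((1 : Multiplicative ℤ), Multiplicative.ofAdd q) : Zsq) • x) =
            (((1 : Multiplicative ℤ), Multiplicative.ofAdd q) : Zsq) • x)) ∧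
    (∀ α β : ℝ, Irrational α → Irrational β → α ≠ β →
      ¬ (InQ Zsq (Bcar α) (Bcar β) ∧ InQ Zsq (Bcar β) (Bcar α))) := by
  refine ⟨fun α hα => ⟨Bcar.smul_inf, fun x y => ?_, ?_⟩, ?_, ?_⟩
  · obtain ⟨g, rfl⟩ := exists_smul_eq Zsq x y
    exact ⟨.act g .var, rfl⟩
  · exact minGen_of_free_of_isPretransitive Bcar.smul_inf (Bcar.eq_one_of_smul_eq hα)
  · intro α β _ _ _ p q hq hαpq hpqβ
    have hq' : (0 : ℝ) < q := Int.cast_pos.2 hq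
    rw [lt_div_iff₀ hq'] at hαpq
    rw [div_lt_iff₀ hq'] at hpqβ
    rw [Bcar.ofAdd_smul_inf_ofAdd_smul_eq_iff, Bcar.ofAdd_smul_inf_ofAdd_smul_eq_iff]
    constructor <;> linarith
  · rintro α β - - hne ⟨hαβ, hβα⟩
    rcases hne.lt_or_gt with hlt | hlt
    exacts [Bcar.not_inQ_of_lt hlt hαβ, Bcar.not_inQ_of_lt hlt hβα]
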